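/- Let t : ℤ → ℂ satisfy ∑_{k=-∞}^{∞} |t_k|² < ∞ and t_0 ≠ 0. Let T_n be the n×n Toeplitz matrix whose (j,k) entry is t_{j-k}, and let Ĉ_n be the n×n circulant matrix whose (j,k) entry is ĉ_{(k-j) mod n}, where ĉ_0 = t_0 and ĉ_k = t_{-k} + t_{n-k} for 1 ≤ k ≤ n-1. Then lim_{n→∞} ‖Ĉ_n − T_n‖_F / ‖T_n‖_F = 0. -/

import Mathlib

open Filter Topology

/-- The `n × n` Toeplitz matrix with `(j,k)` entry `t_{j-k}`. -/
noncomputable def toeplitz (t : ℤ → ℂ) (n : ℕ) : Matrix (Fin n) (Fin n) ℂ :=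
  Matrix.of fun j k => t ((j : ℤ) - (k : ℤ))

/-- Top-row coefficients `ĉ_0 = t_0` and `ĉ_k = t_{-k} + t_{n-k}` for `1 ≤ k ≤ n-1`. -/
noncomputable def hatCoeff (t : ℤ → ℂ) (n : ℕ) (k : ℤ) : ℂ :=
  if k = 0 then t 0 else t (-k) + t ((n : ℤ) - k)

/-- The circulant matrix `Ĉ_n` with `(j,k)` entry `ĉ_{(k-j) mod n}`. -/
noncomputable def hatCirculant (t : ℤ → ℂ) (n : ℕ) : Matrix (Fin n) (Fin n) ℂ :=
  Matrix.of fun j k => hatCoeff t n (((k : ℤ) - (j : ℤ)) % (n : ℤ))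

/-- Frobenius norm of a complex matrix. -/
noncomputable def frobNorm {n : ℕ} (A : Matrix (Fin n) (Fin n) ℂ) : ℝ :=
  Real.sqrt (∑ j, ∑ k, ‖A j k‖ ^ 2)

/-! `Ĉ_n − T_n` vanishes on the diagonal and has entries `t_{j-k+n}` above it and `t_{j-k-n}`
below it, so each index `±m` with `0 < m < n` occurs exactly `m` times and
`‖Ĉ_n − T_n‖_F² = ∑_{0<m<n} m (|t_m|² + |t_{-m}|²)`. For square-summable `t` this is `o(n)`
(Kronecker's lemma, here by dominated convergence), while the diagonal alone gives
`‖T_n‖_F² ≥ n |t_0|²`. -/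

open Finset

theorem sum_range_sum_range_ite_lt {M : Type*} [AddCommMonoid M] (g : ℕ → M) (n : ℕ) :
    ∑ j ∈ range n, ∑ k ∈ range n, (if j < k then g (j + n - k) else 0) =
      ∑ m ∈ range n, m • g m := by
  calc ∑ j ∈ range n, ∑ k ∈ range n, (if j < k then g (j + n - k) else 0)
      = ∑ k ∈ range n, ∑ j ∈ range k, g (n - k + j) := by
        rw [sum_comm]
        refine sum_congr rfl fun k hk => ?_
        rw [← sum_filter]
        have : (range n).filter (· < k) = range k := by
          ext j; simp only [mem_filter, mem_range] at hk ⊢; omega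
        rw [this]
        exact sum_congr rfl fun j hj => by congr 1; rw [mem_range] at hk hj; omega
    _ = ∑ k ∈ range n, ∑ m ∈ Ico (k + 1) n, g m := by
        rw [← sum_range_reflect]
        refine sum_congr rfl fun k hk => ?_
        rw [sum_Ico_eq_sum_range]
        rw [mem_range] at hk
        rw [show n - (k + 1) = n - 1 - k by omega, show n - (n - 1 - k) = k + 1 by omega]
    _ = ∑ m ∈ range n, m • g m := by
        rw [range_eq_Ico, sum_Ico_Ico_comm']
        simp

theorem tendsto_sum_range_mul_div_atTop {a : ℕ → ℝ} (ha : Summable a) (ha0 : ∀ m, 0 ≤ a m) :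
    Tendsto (fun n : ℕ => (∑ m ∈ range n, m * a m) / n) atTop (𝓝 0) := by
  have hdom : Tendsto (fun n : ℕ => ∑' m, (if m < n then (m : ℝ) / n else 0) * a m) atTop
      (𝓝 (∑' _ : ℕ, (0 : ℝ))) := by
    refine tendsto_tsum_of_dominated_convergence ha (fun m => ?_)
      (Eventually.of_forall fun n m => ?_)
    · have hev : (fun n : ℕ => (if m < n then (m : ℝ) / n else 0) * a m) =ᶠ[atTop]
          fun n : ℕ => (m : ℝ) / n * a m := by
        filter_upwards [eventually_gt_atTop m] with n hn
        rw [if_pos hn]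
      rw [tendsto_congr' hev, ← zero_mul (a m)]
      exact (tendsto_const_div_atTop_nhds_zero_nat (m : ℝ)).mul_const _
    · split_ifs with h
      · rw [norm_mul, Real.norm_of_nonneg (by positivity), Real.norm_of_nonneg (ha0 m)]
        refine mul_le_of_le_one_left (ha0 m) (div_le_one_of_le₀ ?_ (by positivity))
        exact_mod_cast h.le
      · simpa using ha0 m
  rw [tsum_zero] at hdom
  refine hdom.congr fun n => ?_
  rw [tsum_eq_sum (s := range n) fun m hm => by simp_all, sum_div]
  refine sum_congr rfl fun m hm => ?_
  rw [if_pos (mem_range.1 hm)]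
  ring

theorem hatCirculant_sub_toeplitz_apply (t : ℤ → ℂ) {n : ℕ} (j k : Fin n) :
    (hatCirculant t n - toeplitz t n) j k =
      if (j : ℕ) < k then t ((j + n - k : ℕ) : ℤ)
      else if (k : ℕ) < j then t (-((k + n - j : ℕ) : ℤ)) else 0 := by
  have hj := j.isLt
  have hk := k.isLt
  simp only [Matrix.sub_apply, hatCirculant, toeplitz, Matrix.of_apply, hatCoeff]
  rcases lt_trichotomy (j : ℕ) k with h | h | h
  · rw [Int.emod_eq_of_lt (by omega) (by omega), if_neg (by omega), if_pos h]
    rw [show (n : ℤ) - (k - j) = (j + n - k : ℕ) by omega, neg_sub]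
    ring
  · simp [h]
  · rw [← Int.add_emod_right, Int.emod_eq_of_lt (by omega) (by omega), if_neg (by omega),
      if_neg (by omega), if_pos h]
    rw [show (n : ℤ) - (k - j + n) = j - k by ring,
      show -((k : ℤ) - j + n) = -(k + n - j : ℕ) by omega]
    ring

theorem sum_norm_sq_hatCirculant_sub_toeplitz (t : ℤ → ℂ) (n : ℕ) :
    ∑ j, ∑ k, ‖(hatCirculant t n - toeplitz t n) j k‖ ^ 2 =
      ∑ m ∈ range n, m * (‖t m‖ ^ 2 + ‖t (-m)‖ ^ 2) := by
  set above : ℕ → ℕ → ℝ := fun j k => if j < k then ‖t ((j + n - k : ℕ) : ℤ)‖ ^ 2 else 0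
  set below : ℕ → ℕ → ℝ := fun j k => if j < k then ‖t (-((j + n - k : ℕ) : ℤ))‖ ^ 2 else 0
  have entry (j k : Fin n) :
      ‖(hatCirculant t n - toeplitz t n) j k‖ ^ 2 = above j k + below k j := by
    rw [hatCirculant_sub_toeplitz_apply]
    simp only [above, below]
    split_ifs <;> first | omega | simp
  simp only [entry, sum_add_distrib]
  rw [sum_comm (f := fun j k : Fin n => below k j)]
  rw [Fin.sum_univ_eq_sum_range (fun j => ∑ k : Fin n, above j k),
    Fin.sum_univ_eq_sum_range (fun j => ∑ k : Fin n, below j k)]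
  simp only [Fin.sum_univ_eq_sum_range (above _), Fin.sum_univ_eq_sum_range (below _), above, below]
  rw [sum_range_sum_range_ite_lt (fun m => ‖t m‖ ^ 2),
    sum_range_sum_range_ite_lt (fun m => ‖t (-(m : ℤ))‖ ^ 2), ← sum_add_distrib]
  simp [mul_add]

theorem mul_norm_sq_le_sum_norm_sq_toeplitz (t : ℤ → ℂ) (n : ℕ) :
    n * ‖t 0‖ ^ 2 ≤ ∑ j, ∑ k, ‖toeplitz t n j k‖ ^ 2 := by
  calc (n : ℝ) * ‖t 0‖ ^ 2 = ∑ j, ‖toeplitz t n j j‖ ^ 2 := by simp [toeplitz]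
    _ ≤ ∑ j, ∑ k, ‖toeplitz t n j k‖ ^ 2 :=
      sum_le_sum fun j _ => single_le_sum (f := fun k => ‖toeplitz t n j k‖ ^ 2)
        (fun _ _ => by positivity) (mem_univ j)

/-- if `t : ℤ → ℂ` is square-summable and `t_0 ≠ 0`, then
`‖Ĉ_n − T_n‖_F / ‖T_n‖_F → 0` as `n → ∞`. -/
theorem hatCirculant_asymptotically_equivalent_toeplitz
    (t : ℤ → ℂ) (hsq : Summable fun k : ℤ => ‖t k‖ ^ 2) (ht0 : t 0 ≠ 0) :
    Tendsto (fun n : ℕ =>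
        frobNorm (hatCirculant t n - toeplitz t n) / frobNorm (toeplitz t n))
      atTop (𝓝 0) := by
  have ha : Summable fun m : ℕ => ‖t m‖ ^ 2 + ‖t (-m)‖ ^ 2 :=
    (hsq.comp_injective Nat.cast_injective).add
      (hsq.comp_injective (neg_injective.comp Nat.cast_injective))
  have hlim := ((tendsto_sum_range_mul_div_atTop ha fun m => by positivity).div_const
    (‖t 0‖ ^ 2)).sqrt
  rw [zero_div, Real.sqrt_zero] at hlim
  refine squeeze_zero' (Eventually.of_forall fun n => by unfold frobNorm; positivity) ?_ hlim
  filter_upwards [eventually_gt_atTop 0] with n hn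
  rw [frobNorm, frobNorm, ← Real.sqrt_div' _ (by positivity),
    sum_norm_sq_hatCirculant_sub_toeplitz, div_div]
  gcongr
  exact mul_norm_sq_le_sum_norm_sq_toeplitz t n
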